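/- arXiv:2602.14503 — 2 statements merged into one kernel-verified Lean document; each statement's English description precedes it below -/
import Mathlib

section
/- Corollary 2 (validity of bounds with only covariate-specific data): let P be a counterfactual joint distribution on Ω and let k ≤ n. The set S₁(P) is a nonempty compact subset of the probability simplex on Ω, hence the objective Q ↦ Q({(r,z,t) : r s = s for all s < k}) attains a minimum value LB₁ and a maximum value UB₁ on S₁(P); moreover LB₁ ≤ PNS(k) ≤ UB₁, where PNS(k) := P({(r,z,t) : r s = s for all s < k}). -/
/-- The probability of an event `E` under a mass function `P` on a finite type. -/
noncomputable def prob {Ω : Type*} [Fintype Ω] (P : Ω → ℝ) (E : Set Ω) : ℝ :=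
  ∑ ω, E.indicator P ω

/-- The probability simplex: nonnegative functions summing to one. -/
def simplexSet (Ω : Type*) [Fintype Ω] : Set (Ω → ℝ) :=
  {Q | (∀ ω, 0 ≤ Q ω) ∧ ∑ ω, Q ω = 1}

/-- The counterfactual sample space: potential outcomes `r : Fin n → Fin n`
(`r s` is `Y_{x_s}`), covariates `z : Π i, Z i`, and treatment `t : Fin n`. -/
abbrev CfOmega (n m : ℕ) (Z : Fin m → Type) [∀ i, Fintype (Z i)] : Type :=
  (Fin n → Fin n) × ((i : Fin m) → Z i) × Fin n

/-- The Corollary 2 feasible set `S₁(P)`: mass functions matching the covariate-specific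
experimental constraints `Q(Y_{x_t} = s, Z_i = z_i) = P(Y_{x_t} = s, Z_i = z_i)` and
covariate-specific observational constraints
`Q(X = t, Y_{x_t} = s, Z_i = z_i) = P(X = t, Y_{x_t} = s, Z_i = z_i)` for every single
covariate index `i`. -/
def feasibleSet1 (n m : ℕ) (Z : Fin m → Type) [∀ i, Fintype (Z i)]
    (P : CfOmega n m Z → ℝ) : Set (CfOmega n m Z → ℝ) :=
  {Q | Q ∈ simplexSet (CfOmega n m Z) ∧
    ∀ (s t : Fin n) (i : Fin m) (zi : Z i),
      (prob Q {ω | ω.1 t = s ∧ ω.2.1 i = zi} =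
        prob P {ω | ω.1 t = s ∧ ω.2.1 i = zi}) ∧
      (prob Q {ω | ω.2.2 = t ∧ ω.1 t = s ∧ ω.2.1 i = zi} =
        prob P {ω | ω.2.2 = t ∧ ω.1 t = s ∧ ω.2.1 i = zi})}

/-- The PNS(k) event `{(r,z,t) : r s = s for all s < k}` (after relabeling of outcomes). -/
def pnsEvent (n m : ℕ) (Z : Fin m → Type) [∀ i, Fintype (Z i)] (k : ℕ) :
    Set (CfOmega n m Z) :=
  {ω | ∀ s : Fin n, (s : ℕ) < k → ω.1 s = s}

/-! `P` itself satisfies all the constraints defining `S₁(P)`, which are closed conditions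
inside the compact simplex, so `S₁(P)` is compact and nonempty and the continuous objective
attains its extrema there; its value at `P` lies between them. -/

lemma continuous_prob {Ω : Type*} [Fintype Ω] (E : Set Ω) :
    Continuous fun Q : Ω → ℝ => prob Q E := by
  refine continuous_finsetSum _ fun ω _ => ?_
  by_cases h : ω ∈ E
  · simpa only [Set.indicator_of_mem h] using continuous_apply ω
  · simpa only [Set.indicator_of_notMem h] using continuous_const

lemma isCompact_simplexSet (Ω : Type*) [Fintype Ω] : IsCompact (simplexSet Ω) :=
  isCompact_stdSimplex ℝ Ω

lemma isClosed_feasibleSet1 (n m : ℕ) (Z : Fin m → Type) [∀ i, Fintype (Z i)]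
    (P : CfOmega n m Z → ℝ) : IsClosed (feasibleSet1 n m Z P) := by
  have hconstraint (E : Set (CfOmega n m Z)) : IsClosed {Q | prob Q E = prob P E} :=
    isClosed_eq (continuous_prob E) continuous_const
  simp only [feasibleSet1, Set.ofPred_and, Set.ofPred_forall, Set.ofPred_mem_eq]
  exact (isCompact_simplexSet _).isClosed.inter <| isClosed_iInter fun s => isClosed_iInter
    fun t => isClosed_iInter fun i => isClosed_iInter fun zi => (hconstraint _).inter (hconstraint _)

lemma isCompact_feasibleSet1 (n m : ℕ) (Z : Fin m → Type) [∀ i, Fintype (Z i)]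
    (P : CfOmega n m Z → ℝ) : IsCompact (feasibleSet1 n m Z P) :=
  (isCompact_simplexSet _).of_isClosed_subset (isClosed_feasibleSet1 n m Z P) fun _ hQ => hQ.1

lemma self_mem_feasibleSet1 {n m : ℕ} {Z : Fin m → Type} [∀ i, Fintype (Z i)]
    {P : CfOmega n m Z → ℝ} (hP : P ∈ simplexSet (CfOmega n m Z)) :
    P ∈ feasibleSet1 n m Z P :=
  ⟨hP, fun _ _ _ _ => ⟨rfl, rfl⟩⟩

theorem corollary2_valid_bounds_general
    (n m : ℕ) (Z : Fin m → Type) [∀ i, Fintype (Z i)]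
    (P : CfOmega n m Z → ℝ) (hP : P ∈ simplexSet (CfOmega n m Z))
    (k : ℕ) :
    (feasibleSet1 n m Z P).Nonempty ∧
    IsCompact (feasibleSet1 n m Z P) ∧
    feasibleSet1 n m Z P ⊆ simplexSet (CfOmega n m Z) ∧
    ∃ LB₁ UB₁ : ℝ,
      IsLeast ((fun Q => prob Q (pnsEvent n m Z k)) '' feasibleSet1 n m Z P) LB₁ ∧
      IsGreatest ((fun Q => prob Q (pnsEvent n m Z k)) '' feasibleSet1 n m Z P) UB₁ ∧
      LB₁ ≤ prob P (pnsEvent n m Z k) ∧ prob P (pnsEvent n m Z k) ≤ UB₁ := by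
  have hPmem := self_mem_feasibleSet1 hP
  have hcompact := isCompact_feasibleSet1 n m Z P
  have hvalues := hcompact.image (continuous_prob (pnsEvent n m Z k))
  have hPvalue := Set.mem_image_of_mem (fun Q => prob Q (pnsEvent n m Z k)) hPmem
  obtain ⟨LB₁, hLB⟩ := hvalues.exists_isLeast ⟨_, hPvalue⟩
  obtain ⟨UB₁, hUB⟩ := hvalues.exists_isGreatest ⟨_, hPvalue⟩
  exact ⟨⟨P, hPmem⟩, hcompact, fun _ hQ => hQ.1, LB₁, UB₁, hLB, hUB, hLB.2 hPvalue, hUB.2 hPvalue⟩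

/-- Corollary 2 (validity of bounds with only covariate-specific data): `S₁(P)` is a
nonempty compact subset of the probability simplex, the objective `Q ↦ Q(PNS(k)-event)`
attains a minimum `LB₁` and a maximum `UB₁` on `S₁(P)`, and `LB₁ ≤ PNS(k) ≤ UB₁`. -/
theorem corollary2_valid_bounds
    (n m : ℕ) (Z : Fin m → Type) [∀ i, Fintype (Z i)] [∀ i, Nonempty (Z i)]
    (P : CfOmega n m Z → ℝ) (hP : P ∈ simplexSet (CfOmega n m Z))
    (k : ℕ) (hk : k ≤ n) :
    (feasibleSet1 n m Z P).Nonempty ∧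
    IsCompact (feasibleSet1 n m Z P) ∧
    feasibleSet1 n m Z P ⊆ simplexSet (CfOmega n m Z) ∧
    ∃ LB₁ UB₁ : ℝ,
      IsLeast ((fun Q => prob Q (pnsEvent n m Z k)) '' feasibleSet1 n m Z P) LB₁ ∧
      IsGreatest ((fun Q => prob Q (pnsEvent n m Z k)) '' feasibleSet1 n m Z P) UB₁ ∧
      LB₁ ≤ prob P (pnsEvent n m Z k) ∧ prob P (pnsEvent n m Z k) ≤ UB₁ :=
  corollary2_valid_bounds_general n m Z P hP k
end

section
/- Tian–Pearl lower bound on PN: for every P as in the context, P(Y₀ = false ∧ X = true ∧ Y = true) ≥ P(Y = true) − P(Y₀ = true); consequently, if P(X = true ∧ Y = true) > 0 then PN ≥ max {0, (P(Y = true) − P(Y₀ = true)) / P(X = true ∧ Y = true)}. -/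
/-- The binary counterfactual sample space: coordinates `(Y₀, Y₁, X)`, i.e. the potential
outcomes `Y₀ = Y_{x'}` and `Y₁ = Y_x` and the treatment `X`. -/
abbrev BOmega : Type := Bool × Bool × Bool

/-- The observed outcome defined by consistency: `Y := if X then Y₁ else Y₀`. -/
def Yobs (ω : BOmega) : Bool := if ω.2.2 then ω.2.1 else ω.1

/-! If `Y = 1` but `Y₀ = 0`, consistency forces `X = 1`; so the event `Y = 1` is covered by
`Y₀ = 1` and `Y₀ = 0 ∧ X = 1 ∧ Y = 1`, and the bound is subadditivity of `P`. -/

section Prob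

variable {Ω : Type*} [Fintype Ω] {P : Ω → ℝ}

theorem prob_nonneg (hP : ∀ ω, 0 ≤ P ω) (E : Set Ω) : 0 ≤ prob P E :=
  Finset.sum_nonneg fun ω _ => Set.indicator_nonneg (fun ω _ => hP ω) ω

theorem prob_mono (hP : ∀ ω, 0 ≤ P ω) {E F : Set Ω} (h : E ⊆ F) : prob P E ≤ prob P F :=
  Finset.sum_le_sum fun ω _ => Set.indicator_le_indicator_of_subset h hP ω

theorem prob_union_add_inter (E F : Set Ω) :
    prob P (E ∪ F) + prob P (E ∩ F) = prob P E + prob P F := by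
  simp only [prob, ← Finset.sum_add_distrib]
  exact Finset.sum_congr rfl fun ω _ => congrFun (Set.indicator_union_add_inter P E F) ω

theorem prob_union_le (hP : ∀ ω, 0 ≤ P ω) (E F : Set Ω) :
    prob P (E ∪ F) ≤ prob P E + prob P F := by
  linarith [prob_union_add_inter (P := P) E F, prob_nonneg hP (E ∩ F)]

end Prob

theorem setOf_yobs_subset :
    {ω : BOmega | Yobs ω = true} ⊆
      {ω | ω.1 = true} ∪ {ω | ω.1 = false ∧ ω.2.2 = true ∧ Yobs ω = true} := by
  rintro ⟨y₀, y₁, x⟩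
  cases y₀ <;> cases x <;> simp [Yobs]

theorem prob_yobs_sub_le {P : BOmega → ℝ} (hP : ∀ ω, 0 ≤ P ω) :
    prob P {ω | Yobs ω = true} - prob P {ω | ω.1 = true} ≤
      prob P {ω | ω.1 = false ∧ ω.2.2 = true ∧ Yobs ω = true} := by
  have := (prob_mono hP setOf_yobs_subset).trans (prob_union_le hP _ _)
  linarith

theorem tian_pearl_pn_lower_bound_general
    (P : BOmega → ℝ) (hP0 : ∀ ω, 0 ≤ P ω) :
    (prob P {ω | Yobs ω = true} - prob P {ω | ω.1 = true} ≤
      prob P {ω | ω.1 = false ∧ ω.2.2 = true ∧ Yobs ω = true}) ∧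
    (0 < prob P {ω | ω.2.2 = true ∧ Yobs ω = true} →
      max 0 ((prob P {ω | Yobs ω = true} - prob P {ω | ω.1 = true}) /
          prob P {ω | ω.2.2 = true ∧ Yobs ω = true}) ≤
        prob P {ω | ω.1 = false ∧ ω.2.2 = true ∧ Yobs ω = true} /
          prob P {ω | ω.2.2 = true ∧ Yobs ω = true}) := by
  refine ⟨prob_yobs_sub_le hP0, fun hpos => max_le ?_ ?_⟩
  · exact div_nonneg (prob_nonneg hP0 _) hpos.le
  · exact div_le_div_of_nonneg_right (prob_yobs_sub_le hP0) hpos.le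

/-- Tian–Pearl lower bound on PN: `P(y'_{x'}, x, y) ≥ P(y) − P(y_{x'})`; consequently,
if `P(x, y) > 0` then `PN ≥ max {0, (P(y) − P(y_{x'})) / P(x, y)}`. -/
theorem tian_pearl_pn_lower_bound
    (P : BOmega → ℝ) (hP0 : ∀ ω, 0 ≤ P ω) (hP1 : ∑ ω, P ω = 1) :
    (prob P {ω | Yobs ω = true} - prob P {ω | ω.1 = true} ≤
      prob P {ω | ω.1 = false ∧ ω.2.2 = true ∧ Yobs ω = true}) ∧
    (0 < prob P {ω | ω.2.2 = true ∧ Yobs ω = true} →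
      max 0 ((prob P {ω | Yobs ω = true} - prob P {ω | ω.1 = true}) /
          prob P {ω | ω.2.2 = true ∧ Yobs ω = true}) ≤
        prob P {ω | ω.1 = false ∧ ω.2.2 = true ∧ Yobs ω = true} /
          prob P {ω | ω.2.2 = true ∧ Yobs ω = true}) :=
  tian_pearl_pn_lower_bound_general P hP0
end
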